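/- arXiv:1708.06651 — 6 statements merged into one kernel-verified Lean document; each statement's English description precedes it below -/
import Mathlib

section
/- Let (X,d) be a metric space, Z a Hausdorff topological vector space, and C ⊆ Z a closed convex pointed cone with nonempty interior. If g : X → Z is almost upper semicontinuous (a-usc) at x₀ ∈ X, then g is quasi upper semicontinuous (q-usc) at x₀. -/
/-!
If q-usc fails for some `k`, first countability gives a sequence `xₙ → x₀` with
`k + g xₙ ∈ C`. The a-usc majorants `zₙ → zl` of `g xₙ` satisfy
`k + zₙ = (k + g xₙ) + (zₙ - g xₙ) ∈ C` because `C + C ⊆ C`; closedness of `C` gives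
`k + zl ∈ C`, and `k + g x₀ = (k + zl) + (g x₀ - zl) ∈ C`, a contradiction.
-/

open Filter Topology Set Pointwise

universe u

/-- A directed nonempty index type, serving as the index of a net. -/
structure DirIx : Type (u + 1) where
  carrier : Type u
  [pre : Preorder carrier]
  [dir : IsDirected carrier (· ≤ ·)]
  [ne : Nonempty carrier]

attribute [instance] DirIx.pre DirIx.dir DirIx.ne

/-- `h` is almost upper semicontinuous (a-usc) at `x₀` relative to the set `K`:
for every net `x` in `K` converging to `x₀` there is a net `z` in `Z` converging
to some `zl` with `h (x α) - z α ∈ -C` for all `α` and `h x₀ - zl ∈ C`. -/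
def AUscAt {X Z : Type*} [TopologicalSpace X] [TopologicalSpace Z] [AddCommGroup Z]
    (C : Set Z) (K : Set X) (h : X → Z) (x₀ : X) : Prop :=
  ∀ (D : DirIx.{u}) (x : D.carrier → X), (∀ α, x α ∈ K) →
    Tendsto x atTop (𝓝 x₀) →
    ∃ (z : D.carrier → Z) (zl : Z), Tendsto z atTop (𝓝 zl) ∧
      (∀ α, h (x α) - z α ∈ -C) ∧ h x₀ - zl ∈ C

/-- `h` is quasi upper semicontinuous (q-usc) at `x₀`: for every `k` with
`k + h x₀ ∉ C` there is a neighborhood `U` of `x₀` with `k + h x ∉ C` on `U`. -/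
def QUscAt {X Z : Type*} [TopologicalSpace X] [TopologicalSpace Z] [AddCommGroup Z]
    (C : Set Z) (h : X → Z) (x₀ : X) : Prop :=
  ∀ k : Z, k + h x₀ ∉ C → ∃ U ∈ 𝓝 x₀, ∀ x ∈ U, k + h x ∉ C

section AlmostUpperSemicontinuous

variable {X Z : Type*} [TopologicalSpace X] [TopologicalSpace Z] [AddCommGroup Z] [ContinuousAdd Z]
  {C : Set Z} {K : Set X} {g : X → Z} {x₀ : X}

theorem AUscAt.add_mem_of_forall_add_mem (hCC : C + C ⊆ C) (hC : IsClosed C)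
    (hg : AUscAt.{u} C K g x₀) (D : DirIx.{u}) (x : D.carrier → X) (hxK : ∀ α, x α ∈ K)
    (hx : Tendsto x atTop (𝓝 x₀)) (k : Z) (hk : ∀ α, k + g (x α) ∈ C) : k + g x₀ ∈ C := by
  obtain ⟨z, zl, hz, hgz, hgzl⟩ := hg D x hxK hx
  have hkz : ∀ α, k + z α ∈ C := fun α => by
    have hzg : z α - g (x α) ∈ C := by simpa using hgz α
    simpa using hCC (add_mem_add (hk α) hzg)
  have hkzl : k + zl ∈ C := hC.mem_of_tendsto (tendsto_const_nhds.add hz) (.of_forall hkz)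
  simpa using hCC (add_mem_add hkzl hgzl)

theorem AUscAt.add_mem_of_seq (hCC : C + C ⊆ C) (hC : IsClosed C)
    (hg : AUscAt.{u} C K g x₀) (x : ℕ → X) (hxK : ∀ n, x n ∈ K) (hx : Tendsto x atTop (𝓝 x₀))
    (k : Z) (hk : ∀ n, k + g (x n) ∈ C) : k + g x₀ ∈ C :=
  hg.add_mem_of_forall_add_mem hCC hC ⟨ULift.{u} ℕ⟩ (x ∘ ULift.down) (fun n => hxK n.down)
    (hx.comp (ULift.orderIso (α := ℕ)).tendsto_atTop) k (fun n => hk n.down)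

theorem AUscAt.qUscAt [FirstCountableTopology X] (hCC : C + C ⊆ C)
    (hC : IsClosed C) (hg : AUscAt.{u} C univ g x₀) : QUscAt C g x₀ := by
  intro k hk
  by_contra! hfreq
  obtain ⟨x, hx, hkx⟩ := exists_seq_forall_of_frequently (frequently_iff.mpr (hfreq _ ·))
  exact hk (hg.add_mem_of_seq hCC hC x (fun _ => mem_univ _) hx k hkx)

end AlmostUpperSemicontinuous

theorem stmt3_general {X Z : Type*} [MetricSpace X]
    [AddCommGroup Z] [TopologicalSpace Z] [IsTopologicalAddGroup Z]
    (C : Set Z) (hconvex : C + C = C) (hCcl : IsClosed C)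
    (g : X → Z) (x₀ : X)
    (hausc : AUscAt.{u} C Set.univ g x₀) :
    QUscAt C g x₀ :=
  hausc.qUscAt hconvex.subset hCcl

theorem stmt3 {X Z : Type*} [MetricSpace X]
    [AddCommGroup Z] [Module ℝ Z] [TopologicalSpace Z] [IsTopologicalAddGroup Z]
    [ContinuousSMul ℝ Z] [T2Space Z]
    (C : Set Z) (hcone : ∀ c ∈ C, ∀ t : ℝ, 0 ≤ t → t • c ∈ C)
    (hconvex : C + C = C) (hpointed : C ∩ (-C) = {0})
    (hint : (interior C).Nonempty) (hCcl : IsClosed C)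
    (g : X → Z) (x₀ : X)
    (hausc : AUscAt.{u} C Set.univ g x₀) :
    QUscAt C g x₀ :=
  stmt3_general C hconvex hCcl g x₀ hausc
end

section
/- Let X be a Hausdorff topological space, Z a Hausdorff topological vector space, C ⊆ Z a convex pointed cone with nonempty interior, and K a nonempty subset of X. If f, g : K → Z are both almost upper semicontinuous (a-usc) at x₀ ∈ K, then f + g is almost upper semicontinuous at x₀. -/
open Filter Topology Set Pointwise

universe u

theorem AUscAt.add {X Z : Type*} [TopologicalSpace X] [TopologicalSpace Z] [AddCommGroup Z]
    [ContinuousAdd Z] {C : Set Z} (hC : C + C ⊆ C) {K : Set X} {f g : X → Z} {x₀ : X}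
    (hf : AUscAt.{u} C K f x₀) (hg : AUscAt.{u} C K g x₀) :
    AUscAt.{u} C K (fun x => f x + g x) x₀ := by
  intro D x hxK hx
  obtain ⟨zf, zlf, hzf, hf_le, hf_lim⟩ := hf D x hxK hx
  obtain ⟨zg, zlg, hzg, hg_le, hg_lim⟩ := hg D x hxK hx
  have hC_neg : -C + -C ⊆ -C := by
    rw [← neg_add]
    exact Set.neg_subset_neg.mpr hC
  refine ⟨zf + zg, zlf + zlg, hzf.add hzg, fun α => ?_, ?_⟩
  · rw [Pi.add_apply, add_sub_add_comm]
    exact hC_neg (Set.add_mem_add (hf_le α) (hg_le α))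
  · rw [add_sub_add_comm]
    exact hC (Set.add_mem_add hf_lim hg_lim)

theorem stmt4_general {X Z : Type*} [TopologicalSpace X]
    [AddCommGroup Z] [TopologicalSpace Z] [IsTopologicalAddGroup Z]
    (C : Set Z)
    (hconvex : C + C = C)
    (K : Set X) (f g : X → Z) (x₀ : X)
    (hf : AUscAt.{u} C K f x₀) (hg : AUscAt.{u} C K g x₀) :
    AUscAt.{u} C K (fun x => f x + g x) x₀ :=
  AUscAt.add hconvex.subset hf hg

theorem stmt4 {X Z : Type*} [TopologicalSpace X] [T2Space X]
    [AddCommGroup Z] [Module ℝ Z] [TopologicalSpace Z] [IsTopologicalAddGroup Z]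
    [ContinuousSMul ℝ Z] [T2Space Z]
    (C : Set Z) (hcone : ∀ c ∈ C, ∀ t : ℝ, 0 ≤ t → t • c ∈ C)
    (hconvex : C + C = C) (hpointed : C ∩ (-C) = {0})
    (hint : (interior C).Nonempty)
    (K : Set X) (hKne : K.Nonempty) (f g : X → Z) (x₀ : X) (hx₀ : x₀ ∈ K)
    (hf : AUscAt.{u} C K f x₀) (hg : AUscAt.{u} C K g x₀) :
    AUscAt.{u} C K (fun x => f x + g x) x₀ :=
  stmt4_general C hconvex K f g x₀ hf hg
end

section
/- Let X be a Hausdorff topological space, Z a Hausdorff topological vector space, C ⊆ Z a convex pointed cone with nonempty interior, K a nonempty subset of X, and f, g : K × K → Z. Assume there exists x₀ ∈ K such that for every fixed y ∈ K with y ≠ x₀, there exist nets (x_α) ⊆ K with lim x_α = x₀ and (w_α) ⊆ Z \ (−int C) such that w_α − f(x_α, y) − g(x₀, y) ∈ −C for all α, and such that the map x ↦ f(x, y) is almost upper semicontinuous at x₀. Then f(x₀, y) + g(x₀, y) ∉ −int C for all y ∈ K with y ≠ x₀. -/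
open Filter Topology Set Pointwise

universe u

/-!
Suppose `f x₀ y + g x₀ y ∈ -int C`. The a-usc majorants `z α` of `f (x α) y` converge to a
point `zl` with `f x₀ y - zl ∈ C`, so `zl + g x₀ y ∈ -int C`, and since `-int C` is open,
`z α + g x₀ y ∈ -int C` eventually. Because `-int C + -C ⊆ -int C`, this pushes first
`f (x α) y + g x₀ y` and then `w α` into `-int C`, contradicting the choice of `w`.
-/

theorem interior_neg {Z : Type*} [TopologicalSpace Z] [InvolutiveNeg Z] [ContinuousNeg Z]
    (s : Set Z) : interior (-s) = -interior s :=
  ((Homeomorph.neg Z).preimage_interior s).symm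

theorem Set.neg_add_neg_subset_neg {Z : Type*} [AddCommGroup Z] {s : Set Z} (hs : s + s ⊆ s) :
    -s + -s ⊆ -s := by
  rw [← neg_add]
  exact neg_subset_neg.mpr hs

theorem add_mem_interior_of_add_subset {Z : Type*} [AddGroup Z] [TopologicalSpace Z]
    [ContinuousConstVAdd Zᵃᵒᵖ Z] {s : Set Z} (hs : s + s ⊆ s) {a b : Z}
    (ha : a ∈ interior s) (hb : b ∈ s) : a + b ∈ interior s :=
  interior_mono hs (subset_interior_add_left (add_mem_add ha hb))

theorem Filter.Tendsto.eventually_mem_interior_of_sub_mem {ι Z : Type*} [AddCommGroup Z]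
    [TopologicalSpace Z] [ContinuousConstVAdd Zᵃᵒᵖ Z] {s : Set Z} (hs : s + s ⊆ s)
    {l : Filter ι} {z w : ι → Z} {a : Z} (hz : Tendsto z l (𝓝 a)) (ha : a ∈ interior s)
    (hwz : ∀ i, w i - z i ∈ s) : ∀ᶠ i in l, w i ∈ interior s :=
  (hz.eventually (isOpen_interior.mem_nhds ha)).mono fun i hi => by
    simpa using add_mem_interior_of_add_subset hs hi (hwz i)

theorem AUscAt.eventually_add_mem_neg_interior {X Z : Type*} [TopologicalSpace X]
    [AddCommGroup Z] [TopologicalSpace Z] [IsTopologicalAddGroup Z] {C : Set Z} {K : Set X}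
    {h : X → Z} {x₀ : X} (hh : AUscAt.{u} C K h x₀) (hC : C + C ⊆ C) {D : DirIx.{u}}
    {x : D.carrier → X} (hxK : ∀ α, x α ∈ K) (hx : Tendsto x atTop (𝓝 x₀)) {v : Z}
    (hv : h x₀ + v ∈ -interior C) : ∀ᶠ α in atTop, h (x α) + v ∈ -interior C := by
  obtain ⟨z, zl, hz, hhz, hzl⟩ := hh D x hxK hx
  have hC' := neg_add_neg_subset_neg hC
  rw [← interior_neg] at hv ⊢
  have hzlv : zl + v ∈ interior (-C) := by
    convert add_mem_interior_of_add_subset hC' hv (neg_mem_neg.mpr hzl) using 1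
    abel
  exact (hz.add_const v).eventually_mem_interior_of_sub_mem hC' hzlv fun α => by simpa using hhz α

theorem stmt7_general {X Z : Type*} [TopologicalSpace X]
    [AddCommGroup Z] [TopologicalSpace Z] [IsTopologicalAddGroup Z]
    (C : Set Z)
    (hconvex : C + C = C)
    (K : Set X) (f g : X → X → Z)
    (x₀ : X)
    (hA : ∀ y ∈ K, y ≠ x₀ →
      (∃ (D : DirIx.{u}) (x : D.carrier → X) (w : D.carrier → Z),
        (∀ α, x α ∈ K) ∧ Tendsto x atTop (𝓝 x₀) ∧
        (∀ α, w α ∉ -interior C) ∧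
        (∀ α, w α - f (x α) y - g x₀ y ∈ -C)) ∧
      AUscAt.{u} C K (fun x => f x y) x₀) :
    ∀ y ∈ K, y ≠ x₀ → f x₀ y + g x₀ y ∉ -interior C := by
  intro y hy hne hfg
  obtain ⟨⟨D, x, w, hxK, hx, hw, hwf⟩, husc⟩ := hA y hy hne
  obtain ⟨α, hα⟩ := (husc.eventually_add_mem_neg_interior hconvex.le hxK hx hfg).exists
  refine hw α ?_
  rw [← interior_neg] at hα ⊢
  convert add_mem_interior_of_add_subset (neg_add_neg_subset_neg hconvex.le) hα (hwf α) using 1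
  abel

theorem stmt7 {X Z : Type*} [TopologicalSpace X] [T2Space X]
    [AddCommGroup Z] [Module ℝ Z] [TopologicalSpace Z] [IsTopologicalAddGroup Z]
    [ContinuousSMul ℝ Z] [T2Space Z]
    (C : Set Z) (hcone : ∀ c ∈ C, ∀ t : ℝ, 0 ≤ t → t • c ∈ C)
    (hconvex : C + C = C) (hpointed : C ∩ (-C) = {0})
    (hint : (interior C).Nonempty)
    (K : Set X) (hKne : K.Nonempty) (f g : X → X → Z)
    (x₀ : X) (hx₀ : x₀ ∈ K)
    (hA : ∀ y ∈ K, y ≠ x₀ →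
      (∃ (D : DirIx.{u}) (x : D.carrier → X) (w : D.carrier → Z),
        (∀ α, x α ∈ K) ∧ Tendsto x atTop (𝓝 x₀) ∧
        (∀ α, w α ∉ -interior C) ∧
        (∀ α, w α - f (x α) y - g x₀ y ∈ -C)) ∧
      AUscAt.{u} C K (fun x => f x y) x₀) :
    ∀ y ∈ K, y ≠ x₀ → f x₀ y + g x₀ y ∉ -interior C :=
  stmt7_general C hconvex K f g x₀ hA
end

section
/- Let X be a Hausdorff topological space, Z a Hausdorff topological vector space, C ⊆ Z a convex pointed cone with nonempty interior, K a nonempty subset of X, and f, g : K × K → Z. Assume there exists x₀ ∈ K such that for every fixed y ∈ K with y ≠ x₀, there exist nets (y_α), (v_α) ⊆ K with lim y_α = y, lim v_α = y and (w_α) ⊆ Z \ (−int C) such that w_α − f(x₀, y_α) − g(x₀, v_α) ∈ −C for all α, and such that the maps z ↦ f(x₀, z) and z ↦ g(x₀, z) are almost upper semicontinuous at y. Then f(x₀, y) + g(x₀, y) ∉ −int C for all y ∈ K with y ≠ x₀. -/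
open Filter Topology Set Pointwise

universe u

/-!
Suppose `f(x₀, y) + g(x₀, y) ∈ -int C`. The a-usc property along `(y_α)` and `(v_α)` gives nets
`z_α → z`, `z'_α → z'` dominating `f(x₀, y_α)` and `g(x₀, v_α)` with `f(x₀, y) + g(x₀, y)`
dominating `z + z'`. Since `-int C` is open and stable under adding elements of `-C`, first
`z + z' ∈ -int C`, then eventually `z_α + z'_α ∈ -int C`, and finally
`w_α ∈ (-C) + (-C) + (-C) + (-int C) ⊆ -int C` for such `α`, contradicting the choice of `w_α`.
-/

section AdditiveSet

variable {Z : Type*} [AddCommGroup Z] {C : Set Z} {a b : Z}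

theorem add_mem_of_add_subset (hC : C + C ⊆ C) (ha : a ∈ C) (hb : b ∈ C) : a + b ∈ C :=
  hC (Set.add_mem_add ha hb)

theorem add_mem_neg_of_add_subset (hC : C + C ⊆ C) (ha : a ∈ -C) (hb : b ∈ -C) :
    a + b ∈ -C := by
  rw [Set.mem_neg, neg_add]
  exact add_mem_of_add_subset hC ha hb

theorem add_mem_neg_interior_of_add_subset [TopologicalSpace Z] [IsTopologicalAddGroup Z]
    (hC : C + C ⊆ C) (ha : a ∈ -C) (hb : b ∈ -interior C) : a + b ∈ -interior C := by
  rw [Set.mem_neg, neg_add]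
  exact interior_mono hC (subset_interior_add_right (Set.add_mem_add ha hb))

end AdditiveSet

theorem stmt10_general {X Z : Type*} [TopologicalSpace X]
    [AddCommGroup Z] [TopologicalSpace Z] [IsTopologicalAddGroup Z]
    (C : Set Z)
    (hconvex : C + C = C)
    (K : Set X) (f g : X → X → Z)
    (x₀ : X)
    (hA : ∀ y ∈ K, y ≠ x₀ →
      (∃ (D : DirIx.{u}) (yn vn : D.carrier → X) (w : D.carrier → Z),
        (∀ α, yn α ∈ K) ∧ (∀ α, vn α ∈ K) ∧
        Tendsto yn atTop (𝓝 y) ∧ Tendsto vn atTop (𝓝 y) ∧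
        (∀ α, w α ∉ -interior C) ∧
        (∀ α, w α - f x₀ (yn α) - g x₀ (vn α) ∈ -C)) ∧
      AUscAt.{u} C K (fun z => f x₀ z) y ∧ AUscAt.{u} C K (fun z => g x₀ z) y) :
    ∀ y ∈ K, y ≠ x₀ → f x₀ y + g x₀ y ∉ -interior C := by
  have hC : C + C ⊆ C := hconvex.subset
  intro y hy hyx hsum
  obtain ⟨⟨D, yn, vn, w, hynK, hvnK, hyn, hvn, hw, hwC⟩, hf, hg⟩ := hA y hy hyx
  obtain ⟨zf, zfl, hzf, hfzf, hfzfl⟩ := hf D yn hynK hyn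
  obtain ⟨zg, zgl, hzg, hgzg, hgzgl⟩ := hg D vn hvnK hvn
  have hlim : zfl + zgl ∈ -interior C := by
    have hdom : -(f x₀ y - zfl + (g x₀ y - zgl)) ∈ -C :=
      Set.neg_mem_neg.mpr (add_mem_of_add_subset hC hfzfl hgzgl)
    have hsplit : zfl + zgl = -(f x₀ y - zfl + (g x₀ y - zgl)) + (f x₀ y + g x₀ y) := by abel
    exact hsplit ▸ add_mem_neg_interior_of_add_subset hC hdom hsum
  obtain ⟨α, hα⟩ := ((hzf.add hzg).eventually (isOpen_interior.neg.mem_nhds hlim)).exists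
  have hsplit : w α = w α - f x₀ (yn α) - g x₀ (vn α) + (f x₀ (yn α) - zf α)
      + (g x₀ (vn α) - zg α) + (zf α + zg α) := by abel
  refine hw α (hsplit ▸ add_mem_neg_interior_of_add_subset hC ?_ hα)
  exact add_mem_neg_of_add_subset hC (add_mem_neg_of_add_subset hC (hwC α) (hfzf α)) (hgzg α)

theorem stmt10 {X Z : Type*} [TopologicalSpace X] [T2Space X]
    [AddCommGroup Z] [Module ℝ Z] [TopologicalSpace Z] [IsTopologicalAddGroup Z]
    [ContinuousSMul ℝ Z] [T2Space Z]
    (C : Set Z) (hcone : ∀ c ∈ C, ∀ t : ℝ, 0 ≤ t → t • c ∈ C)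
    (hconvex : C + C = C) (hpointed : C ∩ (-C) = {0})
    (hint : (interior C).Nonempty)
    (K : Set X) (hKne : K.Nonempty) (f g : X → X → Z)
    (x₀ : X) (hx₀ : x₀ ∈ K)
    (hA : ∀ y ∈ K, y ≠ x₀ →
      (∃ (D : DirIx.{u}) (yn vn : D.carrier → X) (w : D.carrier → Z),
        (∀ α, yn α ∈ K) ∧ (∀ α, vn α ∈ K) ∧
        Tendsto yn atTop (𝓝 y) ∧ Tendsto vn atTop (𝓝 y) ∧
        (∀ α, w α ∉ -interior C) ∧
        (∀ α, w α - f x₀ (yn α) - g x₀ (vn α) ∈ -C)) ∧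
      AUscAt.{u} C K (fun z => f x₀ z) y ∧ AUscAt.{u} C K (fun z => g x₀ z) y) :
    ∀ y ∈ K, y ≠ x₀ → f x₀ y + g x₀ y ∉ -interior C :=
  stmt10_general C hconvex K f g x₀ hA
end

section
/- Let X be a Hausdorff topological space, Z a Hausdorff topological vector space, C ⊆ Z a convex pointed cone with nonempty interior, K a nonempty subset of X, and f, g : K × K → Z. Let x₀ ∈ K be such that g(x₀, y) ∉ −int C for all y ∈ K and f(x₀, x₀) ∈ C. Assume that for every fixed y ∈ K with y ≠ x₀, the map x ↦ f(x, y) is almost upper semicontinuous at x₀ and there exist nets (x_α), (z_α) ⊆ K with lim x_α = x₀ such that g(x₀, z_α) − f(x_α, y) − g(x₀, y) ∈ −C for all α. Then f(x₀, y) + g(x₀, y) ∉ −int C for all y ∈ K. -/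
open Filter Topology Set Pointwise

universe u

/-!
Suppose `f(x₀, y) + g(x₀, y) ∈ -int C`. Because `C + C ⊆ C`, adding an element of `-C` to an
element of `-int C` stays in `-int C`. For `y = x₀` this moves `g(x₀, x₀) = (f + g)(x₀, x₀) - f(x₀, x₀)`
into `-int C`. For `y ≠ x₀`, almost upper semicontinuity gives a net `w_α → l` with
`f(x_α, y) - w_α ∈ -C` and `f(x₀, y) - l ∈ C`, so `l + g(x₀, y) ∈ -int C`, hence eventually
`w_α + g(x₀, y) ∈ -int C`; adding `f(x_α, y) - w_α` and `g(x₀, z_α) - f(x_α, y) - g(x₀, y)`, both in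
`-C`, puts `g(x₀, z_α)` in `-int C`, contradicting the hypothesis on `g`.
-/

section AddClosedInterior

variable {G : Type*} [TopologicalSpace G] {S : Set G}

theorem add_mem_interior_of_add_subset_s13 [AddGroup G] [IsTopologicalAddGroup G] (hS : S + S ⊆ S)
    {a b : G} (ha : a ∈ interior S) (hb : b ∈ S) : a + b ∈ interior S :=
  interior_mono hS (subset_interior_add_left (Set.add_mem_add ha hb))

theorem Filter.Tendsto.exists_mem_interior_of_sub_mem [AddCommGroup G] [IsTopologicalAddGroup G]
    {ι : Type*} {F : Filter ι} [F.NeBot] (hS : S + S ⊆ S) {v w : ι → G} {l : G}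
    (hw : Tendsto w F (𝓝 l)) (hl : l ∈ interior S) (hvw : ∀ i, v i - w i ∈ S) :
    ∃ i, v i ∈ interior S := by
  obtain ⟨i, hi⟩ := (hw.eventually (isOpen_interior.mem_nhds hl)).exists
  exact ⟨i, add_sub_cancel (w i) (v i) ▸ add_mem_interior_of_add_subset_s13 hS hi (hvw i)⟩

end AddClosedInterior

theorem stmt13_general {X Z : Type*} [TopologicalSpace X]
    [AddCommGroup Z] [TopologicalSpace Z] [IsTopologicalAddGroup Z]
    (C : Set Z)
    (hconvex : C + C = C)
    (K : Set X) (f g : X → X → Z)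
    (x₀ : X) (hx₀ : x₀ ∈ K)
    (hg0 : ∀ y ∈ K, g x₀ y ∉ -interior C) (hf0 : f x₀ x₀ ∈ C)
    (hB : ∀ y ∈ K, y ≠ x₀ →
      (AUscAt.{u} C K (fun x => f x y) x₀) ∧
      (∃ (D : DirIx.{u}) (x z : D.carrier → X),
        (∀ α, x α ∈ K) ∧ (∀ α, z α ∈ K) ∧ Tendsto x atTop (𝓝 x₀) ∧
        (∀ α, g x₀ (z α) - f (x α) y - g x₀ y ∈ -C))) :
    ∀ y ∈ K, f x₀ y + g x₀ y ∉ -interior C := by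
  intro y hy hmem
  have hS : -C + -C ⊆ -C := by rw [← neg_add, hconvex]
  have hneg_interior : -interior C = interior (-C) := (Homeomorph.neg Z).preimage_interior C
  rw [hneg_interior] at hg0 hmem
  by_cases hyx : y = x₀
  · subst hyx
    refine hg0 y hy ?_
    simpa using add_mem_interior_of_add_subset_s13 hS hmem (Set.neg_mem_neg.mpr hf0)
  obtain ⟨husc, D, x, z, hxK, hzK, hxlim, hgf⟩ := hB y hy hyx
  obtain ⟨w, l, hw, hfw, hfl⟩ := husc D x hxK hxlim
  have hl : l + g x₀ y ∈ interior (-C) := by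
    have hlf : l - f x₀ y ∈ -C := by rwa [Set.mem_neg, neg_sub]
    convert add_mem_interior_of_add_subset_s13 hS hmem hlf using 1
    abel
  have hdiff : ∀ α, g x₀ (z α) - (w α + g x₀ y) ∈ -C := fun α => by
    rw [show g x₀ (z α) - (w α + g x₀ y)
        = (g x₀ (z α) - f (x α) y - g x₀ y) + (f (x α) y - w α) by abel]
    exact hS (Set.add_mem_add (hgf α) (hfw α))
  obtain ⟨α, hα⟩ := (hw.add_const (g x₀ y)).exists_mem_interior_of_sub_mem hS hl hdiff
  exact hg0 _ (hzK α) hα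

theorem stmt13 {X Z : Type*} [TopologicalSpace X] [T2Space X]
    [AddCommGroup Z] [Module ℝ Z] [TopologicalSpace Z] [IsTopologicalAddGroup Z]
    [ContinuousSMul ℝ Z] [T2Space Z]
    (C : Set Z) (hcone : ∀ c ∈ C, ∀ t : ℝ, 0 ≤ t → t • c ∈ C)
    (hconvex : C + C = C) (hpointed : C ∩ (-C) = {0})
    (hint : (interior C).Nonempty)
    (K : Set X) (hKne : K.Nonempty) (f g : X → X → Z)
    (x₀ : X) (hx₀ : x₀ ∈ K)
    (hg0 : ∀ y ∈ K, g x₀ y ∉ -interior C) (hf0 : f x₀ x₀ ∈ C)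
    (hB : ∀ y ∈ K, y ≠ x₀ →
      (AUscAt.{u} C K (fun x => f x y) x₀) ∧
      (∃ (D : DirIx.{u}) (x z : D.carrier → X),
        (∀ α, x α ∈ K) ∧ (∀ α, z α ∈ K) ∧ Tendsto x atTop (𝓝 x₀) ∧
        (∀ α, g x₀ (z α) - f (x α) y - g x₀ y ∈ -C))) :
    ∀ y ∈ K, f x₀ y + g x₀ y ∉ -interior C :=
  stmt13_general C hconvex K f g x₀ hx₀ hg0 hf0 hB
end

section
/- Let X and Z be Hausdorff topological vector spaces, C ⊆ Z a convex pointed cone with nonempty interior, and K a nonempty convex subset of X. Let f, g : K × K → Z and let x₀ ∈ K satisfy g(x₀, y) ∉ −int C for all y ∈ K. Assume: (i) f(x, x) ∈ C for all x ∈ K; (ii) for every fixed y ∈ K with y ≠ x₀ and every t ∈ (0,1) there exists z = z(t,y) ∈ K such that g(x₀, z) − f((1−t)x₀ + t y, y) − g(x₀, y) ∈ −C; (iii) if for some y ∈ K one has f((1−t)x₀ + t y, y) + g(x₀, y) ∉ −int C for all t ∈ (0,1], then f(x₀, y) + g(x₀, y) ∉ −int C. Then f(x₀, y) + g(x₀,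 y) ∉ −int C for all y ∈ K. -/
open Filter Topology Set Pointwise

universe u

/-! Every step of the proof is an instance of one fact about an additively closed set `C`: if
`u ∈ -int C` and `v` lies below `u` (that is, `u - v ∈ C`), then `v ∈ -int C`, because
`int C + C ⊆ int (C + C) ⊆ int C`. Applied with `v = g(x₀, ·)` it contradicts the choice of `x₀`:
on the diagonal `t = 1` (or `y = x₀`) via (i), and for `t ∈ (0,1)` via the point `z` of (ii).
Hence the premise of (iii) holds for every `y`. -/

theorem mem_neg_interior_of_sub_mem {Z : Type*} [AddCommGroup Z] [TopologicalSpace Z]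
    [IsTopologicalAddGroup Z] {C : Set Z} (hC : C + C ⊆ C) {u v : Z}
    (hu : u ∈ -interior C) (huv : u - v ∈ C) : v ∈ -interior C := by
  have hsum : -u + (u - v) ∈ interior C :=
    interior_mono hC (subset_interior_add_left (add_mem_add hu huv))
  rw [show -u + (u - v) = -v by abel] at hsum
  exact mem_neg.mpr hsum

theorem stmt16_general {X Z : Type*}
    [AddCommGroup X] [Module ℝ X]
    [AddCommGroup Z] [TopologicalSpace Z] [IsTopologicalAddGroup Z]
    (C : Set Z)
    (hconvex : C + C = C)
    (K : Set X)
    (f g : X → X → Z) (x₀ : X)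
    (hg0 : ∀ y ∈ K, g x₀ y ∉ -interior C)
    (hi : ∀ x ∈ K, f x x ∈ C)
    (hii : ∀ y ∈ K, y ≠ x₀ → ∀ t ∈ Set.Ioo (0 : ℝ) 1, ∃ z ∈ K,
      g x₀ z - f ((1 - t) • x₀ + t • y) y - g x₀ y ∈ -C)
    (hiii : ∀ y ∈ K,
      (∀ t ∈ Set.Ioc (0 : ℝ) 1, f ((1 - t) • x₀ + t • y) y + g x₀ y ∉ -interior C) →
      f x₀ y + g x₀ y ∉ -interior C) :
    ∀ y ∈ K, f x₀ y + g x₀ y ∉ -interior C := by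
  have hC : C + C ⊆ C := hconvex.subset
  have diagonal : ∀ y ∈ K, f y y + g x₀ y ∉ -interior C := fun y hy h =>
    hg0 y hy (mem_neg_interior_of_sub_mem hC h (by rw [add_sub_cancel_right]; exact hi y hy))
  intro y hy
  by_cases hyx : y = x₀
  · subst hyx
    exact diagonal y hy
  refine hiii y hy fun t ht hmem => ?_
  rcases ht.2.eq_or_lt with rfl | ht1
  · rw [sub_self, zero_smul, one_smul, zero_add] at hmem
    exact diagonal y hy hmem
  · obtain ⟨z, hz, hzC⟩ := hii y hy hyx t ⟨ht.1, ht1⟩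
    refine hg0 z hz (mem_neg_interior_of_sub_mem hC hmem ?_)
    convert mem_neg.mp hzC using 1
    abel

theorem stmt16 {X Z : Type*}
    [AddCommGroup X] [Module ℝ X] [TopologicalSpace X] [IsTopologicalAddGroup X]
    [ContinuousSMul ℝ X] [T2Space X]
    [AddCommGroup Z] [Module ℝ Z] [TopologicalSpace Z] [IsTopologicalAddGroup Z]
    [ContinuousSMul ℝ Z] [T2Space Z]
    (C : Set Z) (hcone : ∀ c ∈ C, ∀ t : ℝ, 0 ≤ t → t • c ∈ C)
    (hconvex : C + C = C) (hpointed : C ∩ (-C) = {0})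
    (hint : (interior C).Nonempty)
    (K : Set X) (hKne : K.Nonempty) (hKconv : Convex ℝ K)
    (f g : X → X → Z) (x₀ : X) (hx₀ : x₀ ∈ K)
    (hg0 : ∀ y ∈ K, g x₀ y ∉ -interior C)
    (hi : ∀ x ∈ K, f x x ∈ C)
    (hii : ∀ y ∈ K, y ≠ x₀ → ∀ t ∈ Set.Ioo (0 : ℝ) 1, ∃ z ∈ K,
      g x₀ z - f ((1 - t) • x₀ + t • y) y - g x₀ y ∈ -C)
    (hiii : ∀ y ∈ K,
      (∀ t ∈ Set.Ioc (0 : ℝ) 1, f ((1 - t) • x₀ + t • y) y + g x₀ y ∉ -interior C) →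
      f x₀ y + g x₀ y ∉ -interior C) :
    ∀ y ∈ K, f x₀ y + g x₀ y ∉ -interior C :=
  stmt16_general C hconvex K f g x₀ hg0 hi hii hiii
end
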